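/- Let Γ ≤ Aut(T) be a group acting on a rooted tree, let g ∈ Γ, and let v ≤ w be vertices such that g fixes v but g moves w. Then the normal closure of g in Γ contains the commutator subgroup rist_Γ(w)' of the rigid stabilizer of w. -/

import Mathlib

/-! A tree automorphism `g` preserves lengths, so if `g` moves `w`, then `w` and `g w` are distinct
vertices of the same level and their subtrees are disjoint. For `a, b ∈ rist_Γ(w)` the conjugate
`g b⁻¹ g⁻¹` lives in `rist(g w)` and therefore commutes with `a`; this turns `⁅a, b⁆` into the
product `⁅a b, g⁆ ⁅a, g⁆⁻¹ ⁅b, g⁆⁻¹` of commutators with `g`, each of which lies in the normal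
closure of `g`. -/

open List

/-- Vertices of the regular rooted tree over alphabet `X`: finite words. -/
abbrev Vtx (X : Type*) := List X

section Tree

variable {X : Type*} [DecidableEq X]

/-- A permutation of the vertex set is a rooted-tree automorphism if it fixes the
root and maps children of a vertex to children of its image. -/
def IsTreeAut (f : Equiv.Perm (Vtx X)) : Prop :=
  f [] = [] ∧ ∀ (w : Vtx X) (x : X), ∃ y : X, f (w ++ [x]) = f w ++ [y]

/-- The state (section) of `f` at the vertex `w`, as a function on vertices. -/
def stateFun (f : Equiv.Perm (Vtx X)) (w : Vtx X) : Vtx X → Vtx X :=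
  fun t => (f (w ++ t)).drop w.length

/-- The rigid stabilizer of the vertex `v` in the full automorphism group:
all permutations moving only (proper or improper) descendants of `v`. -/
def rist (v : Vtx X) : Subgroup (Equiv.Perm (Vtx X)) where
  carrier := {g | ∀ w : Vtx X, ¬ v <+: w → g w = w}
  one_mem' := by intro w _; rfl
  mul_mem' := by
    intro a b ha hb w hw
    have : (a * b) w = a (b w) := rfl
    rw [this, hb w hw, ha w hw]
  inv_mem' := by
    intro a ha w hw
    have h := ha w hw
    conv_lhs => rw [← h]
    simp

/-- The rigid stabilizer of `v` in `G`. -/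
def ristG (G : Subgroup (Equiv.Perm (Vtx X))) (v : Vtx X) :
    Subgroup (Equiv.Perm (Vtx X)) :=
  rist v ⊓ G

/-- The `n`-th level rigid stabilizer of `G`: the subgroup generated by the
rigid stabilizers of all vertices of level `n`. -/
def ristLevel (G : Subgroup (Equiv.Perm (Vtx X))) (n : ℕ) :
    Subgroup (Equiv.Perm (Vtx X)) :=
  ⨆ v ∈ {v : Vtx X | v.length = n}, ristG G v

/-- The `n`-th level stabilizer of `G`: elements fixing all vertices of level `≤ n`. -/
def stabLevel (G : Subgroup (Equiv.Perm (Vtx X))) (n : ℕ) :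
    Subgroup (Equiv.Perm (Vtx X)) :=
  G ⊓ { carrier := {g | ∀ w : Vtx X, w.length ≤ n → g w = w}
        one_mem' := by intro w _; rfl
        mul_mem' := by
          intro a b ha hb w hw
          have : (a * b) w = a (b w) := rfl
          rw [this, hb w hw, ha w hw]
        inv_mem' := by
          intro a ha w hw
          have h := ha w hw
          conv_lhs => rw [← h]
          simp }

/-- Underlying function of the vtr `v*g`. -/
def vtrFun (v : Vtx X) (g : Vtx X → Vtx X) : Vtx X → Vtx X :=
  fun w => if v <+: w then v ++ g (w.drop v.length) else w

lemma vtr_aux (v : Vtx X) (g h : Vtx X → Vtx X)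
    (hgh : ∀ t, h (g t) = t) (w : Vtx X) :
    vtrFun v h (vtrFun v g w) = w := by
  by_cases hp : v <+: w
  · obtain ⟨t, rfl⟩ := hp
    simp [vtrFun, List.drop_left, hgh, List.prefix_append]
  · simp [vtrFun, hp]

/-- The vtr `v*g`: the automorphism acting as `g` on the subtree rooted
at `v` and trivially elsewhere. -/
def vtr (v : Vtx X) (g : Equiv.Perm (Vtx X)) : Equiv.Perm (Vtx X) where
  toFun := vtrFun v g
  invFun := vtrFun v g.symm
  left_inv := vtr_aux v g g.symm fun t => g.symm_apply_apply t
  right_inv := vtr_aux v g.symm g fun t => g.apply_symm_apply t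

lemma vtr_apply (v : Vtx X) (g : Equiv.Perm (Vtx X)) (w : Vtx X) :
    vtr v g w = if v <+: w then v ++ g (w.drop v.length) else w := rfl

/-- `g ↦ v*g` as a group homomorphism. -/
def vtrHom (v : Vtx X) : Equiv.Perm (Vtx X) →* Equiv.Perm (Vtx X) where
  toFun := vtr v
  map_one' := by
    ext w
    by_cases hp : v <+: w
    · obtain ⟨t, rfl⟩ := hp
      simp [vtr, vtrFun, List.drop_left, List.prefix_append]
    · simp [vtr, vtrFun, hp]
  map_mul' := by
    intro a b
    ext w
    have hmul : (vtr v a * vtr v b) w = vtr v a (vtr v b w) := rfl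
    rw [hmul]
    by_cases hp : v <+: w
    · obtain ⟨t, rfl⟩ := hp
      simp [vtr, vtrFun, List.drop_left, List.prefix_append]
    · simp [vtr, vtrFun, hp]

/-- `K` is a branching subgroup of `G`: `K ≤ G` and `v*K ≤ K` for all vertices. -/
def IsBranching (G K : Subgroup (Equiv.Perm (Vtx X))) : Prop :=
  K ≤ G ∧ ∀ v : Vtx X, ∀ g ∈ K, vtr v g ∈ K

/-- The product `X^n * K` of the translates `v*K` over all vertices of level `n`. -/
def levelProd (K : Subgroup (Equiv.Perm (Vtx X))) (n : ℕ) :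
    Subgroup (Equiv.Perm (Vtx X)) :=
  Subgroup.closure {p | ∃ v : Vtx X, v.length = n ∧ ∃ g ∈ K, p = vtr v g}

/-- The group `G⋉v` of states at `v` of the rigid stabilizer:
those `g ∈ G` with `v*g ∈ G`. -/
def pristSub (G : Subgroup (Equiv.Perm (Vtx X))) (v : Vtx X) :
    Subgroup (Equiv.Perm (Vtx X)) :=
  G ⊓ G.comap (vtrHom v)

/-- `G_#`, the intersection of all `G⋉v` (the maximal branching subgroup when
`G` is regular branch). -/
def Gsharp (G : Subgroup (Equiv.Perm (Vtx X))) : Subgroup (Equiv.Perm (Vtx X)) :=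
  ⨅ v : Vtx X, pristSub G v

/-- `G` is self-similar: all states of elements of `G` are (induced by) elements of `G`. -/
def SelfSimilar (G : Subgroup (Equiv.Perm (Vtx X))) : Prop :=
  ∀ g ∈ G, ∀ w : Vtx X, ∃ h ∈ G, ∀ t : Vtx X, h t = stateFun g w t

/-- `G` is level-transitive: transitive on each level of the tree. -/
def LevelTransitive (G : Subgroup (Equiv.Perm (Vtx X))) : Prop :=
  ∀ v w : Vtx X, v.length = w.length → ∃ g ∈ G, g v = w

/-- `G` is recurrent: the state at `v` of the stabilizer of `v` is all of `G`. -/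
def Recurrent (G : Subgroup (Equiv.Perm (Vtx X))) : Prop :=
  ∀ v : Vtx X, ∀ h : Equiv.Perm (Vtx X),
    (h ∈ G ↔ ∃ g ∈ G, g v = v ∧ ∀ t : Vtx X, h t = stateFun g v t)

/-- `G` is a regular branch group (for this action): it has a non-trivial
branching subgroup `K` with all products `X^n*K` of finite index in `G`. -/
def RegularBranch (G : Subgroup (Equiv.Perm (Vtx X))) : Prop :=
  ∃ K : Subgroup (Equiv.Perm (Vtx X)), IsBranching G K ∧ K ≠ ⊥ ∧
    ∀ n : ℕ, ((levelProd K n).subgroupOf G).FiniteIndex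

/-- The subgroup generated by `e`-th powers of elements of `H`. -/
def powSubgroup {P : Type*} [Group P] (H : Subgroup P) (e : ℕ) : Subgroup P :=
  Subgroup.closure {x | ∃ h ∈ H, x = h ^ e}

/-- The normal closure of `g` in the subgroup `Γ`. -/
def nclosure {P : Type*} [Group P] (Γ : Subgroup P) (g : P) : Subgroup P :=
  Subgroup.closure {x | ∃ h ∈ Γ, x = h * g * h⁻¹}

/-- `g` is finite-state: it has only finitely many states. -/
def FiniteState (g : Equiv.Perm (Vtx X)) : Prop :=
  {f : Vtx X → Vtx X | ∃ w : Vtx X, f = stateFun g w}.Finite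

/-- `g` fixes the boundary ray `y`, i.e. it fixes each of its finite prefixes. -/
def fixesRay (g : Equiv.Perm (Vtx X)) (y : ℕ → X) : Prop :=
  ∀ n : ℕ, g ((List.range n).map y) = (List.range n).map y

end Tree

/-- A group satisfies a (non-trivial) group law. -/
def SatisfiesLaw (G : Type*) [Group G] : Prop :=
  ∃ w : FreeGroup ℕ, w ≠ 1 ∧ ∀ φ : FreeGroup ℕ →* G, φ w = 1

section TreeAut

variable {X : Type*}

namespace IsTreeAut

variable {f : Equiv.Perm (Vtx X)}

theorem length_apply (hf : IsTreeAut f) (u : Vtx X) : (f u).length = u.length := by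
  induction u using List.reverseRecOn with
  | nil => simp [hf.1]
  | append_singleton u x ih =>
    obtain ⟨y, hy⟩ := hf.2 u x
    simp [hy, ih]

theorem isPrefix_apply (hf : IsTreeAut f) {u t : Vtx X} (h : u <+: t) : f u <+: f t := by
  obtain ⟨s, rfl⟩ := h
  induction s using List.reverseRecOn with
  | nil => simp
  | append_singleton s x ih =>
    obtain ⟨y, hy⟩ := hf.2 (u ++ s) x
    rw [← List.append_assoc, hy]
    exact ih.trans ⟨[y], rfl⟩

theorem conj_mem_rist [DecidableEq X] (hf : IsTreeAut f) {b : Equiv.Perm (Vtx X)} {w : Vtx X}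
    (hb : b ∈ rist w) : f * b * f⁻¹ ∈ rist (f w) := by
  intro x hx
  have hx' : ¬ w <+: f⁻¹ x := fun h => hx (by simpa using hf.isPrefix_apply h)
  change f (b (f⁻¹ x)) = x
  rw [hb _ hx', Equiv.Perm.inv_def, Equiv.apply_symm_apply]

end IsTreeAut

variable [DecidableEq X]

theorem isPrefix_apply_of_mem_rist {a : Equiv.Perm (Vtx X)} {u x : Vtx X} (ha : a ∈ rist u)
    (hx : u <+: x) : u <+: a x := by
  by_contra h
  have hfix : a⁻¹ (a x) = a x := (rist u).inv_mem ha _ h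
  rw [Equiv.Perm.inv_def, Equiv.symm_apply_apply] at hfix
  exact h (hfix ▸ hx)

theorem commute_of_mem_rist {a d : Equiv.Perm (Vtx X)} {u u' : Vtx X}
    (ha : a ∈ rist u) (hd : d ∈ rist u') (h₁ : ¬ u <+: u') (h₂ : ¬ u' <+: u) :
    Commute a d := by
  have disjoint : ∀ {x}, u <+: x → ¬ u' <+: x := fun hu hu' =>
    (List.prefix_or_prefix_of_prefix hu hu').elim h₁ h₂
  refine Equiv.ext fun x => ?_
  change a (d x) = d (a x)
  by_cases hu : u <+: x
  · rw [hd x (disjoint hu), hd (a x) (disjoint (isPrefix_apply_of_mem_rist ha hu))]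
  by_cases hu' : u' <+: x
  · have hdx : ¬ u <+: d x := fun h => disjoint h (isPrefix_apply_of_mem_rist hd hu')
    rw [ha x hu, ha (d x) hdx]
  · simp only [ha x hu, hd x hu']

end TreeAut

section Commutator

open scoped commutatorElement

variable {G : Type*} [Group G]

theorem commutatorElement_mem_nclosure {Γ : Subgroup G} {g h : G} (hh : h ∈ Γ) :
    ⁅h, g⁆ ∈ nclosure Γ g := by
  have hg : g ∈ nclosure Γ g := Subgroup.subset_closure ⟨1, one_mem Γ, by group⟩
  exact mul_mem (Subgroup.subset_closure ⟨h, hh, rfl⟩) (inv_mem hg)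

theorem commutatorElement_eq_of_commute_conj {a b g : G} (h : Commute a (g * b⁻¹ * g⁻¹)) :
    ⁅a, b⁆ = ⁅a * b, g⁆ * ⁅a, g⁆⁻¹ * ⁅b, g⁆⁻¹ := by
  have h' : g * b⁻¹ * g⁻¹ * a⁻¹ = a⁻¹ * (g * b⁻¹ * g⁻¹) := h.inv_left.eq.symm
  simp only [commutatorElement_def]
  calc a * b * a⁻¹ * b⁻¹
      = a * b * (g * b⁻¹ * g⁻¹ * a⁻¹) * (g * b * g⁻¹) * b⁻¹ := by rw [h']; group
    _ = a * b * g * (a * b)⁻¹ * g⁻¹ * (a * g * a⁻¹ * g⁻¹)⁻¹ * (b * g * b⁻¹ * g⁻¹)⁻¹ := by group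

end Commutator

theorem normal_closure_contains_rist_commutator_general
    {X : Type*} [DecidableEq X]
    (Γ : Subgroup (Equiv.Perm (Vtx X))) (hAut : ∀ g ∈ Γ, IsTreeAut g)
    (g : Equiv.Perm (Vtx X)) (hg : g ∈ Γ) (w : Vtx X)
    (hmove : g w ≠ w) :
    ⁅ristG Γ w, ristG Γ w⁆ ≤ nclosure Γ g := by
  rw [Subgroup.commutator_le]
  rintro a ⟨haw, haΓ⟩ b ⟨hbw, hbΓ⟩
  have hlen : (g w).length = w.length := (hAut g hg).length_apply w
  have hcomm : Commute a (g * b⁻¹ * g⁻¹) :=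
    commute_of_mem_rist haw ((hAut g hg).conj_mem_rist (inv_mem hbw))
      (fun h => hmove (h.eq_of_length hlen.symm).symm) (fun h => hmove (h.eq_of_length hlen))
  rw [commutatorElement_eq_of_commute_conj hcomm]
  exact mul_mem (mul_mem (commutatorElement_mem_nclosure (mul_mem haΓ hbΓ))
    (inv_mem (commutatorElement_mem_nclosure haΓ))) (inv_mem (commutatorElement_mem_nclosure hbΓ))

/-- if `g ∈ Γ` fixes `v` and moves a descendant `w` of `v`, then the
normal closure of `g` in `Γ` contains the commutator subgroup of `rist_Γ(w)`. -/
theorem normal_closure_contains_rist_commutator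
    {X : Type*} [DecidableEq X] [Fintype X]
    (Γ : Subgroup (Equiv.Perm (Vtx X))) (hAut : ∀ g ∈ Γ, IsTreeAut g)
    (g : Equiv.Perm (Vtx X)) (hg : g ∈ Γ) (v w : Vtx X)
    (hvw : v <+: w) (hfix : g v = v) (hmove : g w ≠ w) :
    ⁅ristG Γ w, ristG Γ w⁆ ≤ nclosure Γ g :=
  normal_closure_contains_rist_commutator_general Γ hAut g hg w hmove
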